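/- Let K be a field and A = K[s,t,x,y]/(sx^2+txy+sy^2). Then A is an integral domain, and the set ⋃_{n∈ℕ} Ass_A A/(x^n,y^n)A, the union over all positive integers n of the sets of associated primes of the A-modules A/(x^n,y^n)A, is infinite. -/

import Mathlib

set_option synthInstance.maxHeartbeats 1000000
set_option maxHeartbeats 1000000

open MvPolynomial

/-- The polynomial `sx² + txy + sy²` in `K[s,t,x,y]`, with `s = X 0`, `t = X 1`, `x = X 2`,
`y = X 3`. -/
noncomputable def sQuad (K : Type) [Field K] : MvPolynomial (Fin 4) K :=
  X 0 * X 2 ^ 2 + X 1 * X 2 * X 3 + X 0 * X 3 ^ 2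

/-- The hypersurface `A = K[s,t,x,y]/(sx² + txy + sy²)`. -/
abbrev Aring (K : Type) [Field K] : Type :=
  MvPolynomial (Fin 4) K ⧸ Ideal.span {sQuad K}

/-- The quotient map `K[s,t,x,y] → A`. -/
noncomputable def π (K : Type) [Field K] : MvPolynomial (Fin 4) K →+* Aring K :=
  Ideal.Quotient.mk _

/-!
`A` is a domain because `sx² + txy + sy² = (x² + y²)·s + txy` is linear in `s` with coprime
coefficients in the UFD `K[t,x,y]`.

Let `U n ∈ K[s,t]` be the Lucas sequence `U (n+2) = t U (n+1) - s² U n`, `U 0 = 0`, `U 1 = 1`, so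
that `U (n+1) (0,t) = tⁿ`. Modulo `f = sx² + txy + sy²` the same recurrence gives
`U (l+1) · s xˡ y ≡ ±(sy)ˡ⁺¹ mod xˡ⁺¹`, hence `U (l+1) · s xˡ y ∈ (xˡ⁺¹, yˡ⁺¹)A`. Conversely, the
`K[s,t]`-linear functional on `K[s,t][x,y]` sending `xⁱ yʲ` with `i + j = l + 1` to `±sⁱ U j` kills
`(xˡ⁺¹, f)`, maps `(yˡ⁺¹)` into `(U (l+1))`, and sends `g · s xˡ y` to `g sˡ⁺¹`. As `x` and `y`
also kill `s xˡ y`, an element `a` kills `s xˡ y` in `A/(xˡ⁺¹, yˡ⁺¹)` iff `U (l+1) ∣ a(s,t,0,0)`.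
So for each prime factor `p` of `U (l+1)`, `{a | p ∣ a(s,t,0,0)}` is the annihilator of
`(U (l+1)/p) · s xˡ y`. Since `U` is a strong divisibility sequence, `U q` and `U q'` have no
common prime factor for distinct primes `q, q'`, so these associated primes are pairwise distinct.
-/

section Lucas

variable {R : Type*} [CommRing R]

def lucasU (P Q : R) : ℕ → R
  | 0 => 0
  | 1 => 1
  | n + 2 => P * lucasU P Q (n + 1) - Q * lucasU P Q n

variable (P Q : R)

@[simp] theorem lucasU_zero : lucasU P Q 0 = 0 := rfl

@[simp] theorem lucasU_one : lucasU P Q 1 = 1 := rfl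

theorem lucasU_add_two (n : ℕ) :
    lucasU P Q (n + 2) = P * lucasU P Q (n + 1) - Q * lucasU P Q n := rfl

theorem map_lucasU {S F : Type*} [CommRing S] [FunLike F R S] [RingHomClass F R S] (f : F) :
    ∀ n, f (lucasU P Q n) = lucasU (f P) (f Q) n
  | 0 => by simp
  | 1 => by simp
  | n + 2 => by simp [lucasU_add_two, map_lucasU f n, map_lucasU f (n + 1)]

theorem lucasU_zero_right : ∀ n, lucasU P 0 (n + 1) = P ^ n
  | 0 => by simp
  | n + 1 => by rw [lucasU_add_two, lucasU_zero_right n]; ring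

theorem lucasU_add (m : ℕ) : ∀ n, lucasU P Q (m + n + 1) =
    lucasU P Q (m + 1) * lucasU P Q (n + 1) - Q * lucasU P Q m * lucasU P Q n
  | 0 => by simp
  | 1 => by simp only [lucasU_add_two, Nat.reduceAdd, zero_add, lucasU_zero, lucasU_one]; ring
  | n + 2 => by
    rw [show m + (n + 2) + 1 = m + n + 1 + 2 by omega, lucasU_add_two,
      show m + n + 1 + 1 = m + (n + 1) + 1 by omega, lucasU_add m n, lucasU_add m (n + 1),
      lucasU_add_two P Q (n + 1), lucasU_add_two P Q n]
    ring

variable {P Q} {p : R} (hp : Prime p) (hpQ : ¬p ∣ Q)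
include hp hpQ

theorem Prime.not_dvd_lucasU_succ_of_dvd : ∀ {n}, p ∣ lucasU P Q n → ¬p ∣ lucasU P Q (n + 1)
  | 0, _, h => hp.not_isUnit (isUnit_of_dvd_one (by simpa using h))
  | n + 1, h₁, h₂ => by
    have : p ∣ Q * lucasU P Q n := by
      rw [show Q * lucasU P Q n = P * lucasU P Q (n + 1) - lucasU P Q (n + 2) by
        rw [lucasU_add_two]; ring]
      exact dvd_sub (h₁.mul_left P) h₂
    exact (hp.dvd_or_dvd this).elim hpQ (Prime.not_dvd_lucasU_succ_of_dvd · h₁)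

theorem Prime.dvd_lucasU_add_iff {m : ℕ} (hm : p ∣ lucasU P Q m) :
    ∀ n, p ∣ lucasU P Q (m + n) ↔ p ∣ lucasU P Q n
  | 0 => by simpa using hm
  | n + 1 => by
    rw [← add_assoc, lucasU_add, dvd_sub_left ((hm.mul_left Q).mul_right _),
      hp.dvd_mul, or_iff_right (hp.not_dvd_lucasU_succ_of_dvd hpQ hm)]

theorem Prime.dvd_lucasU_add_mul_iff {m : ℕ} (hm : p ∣ lucasU P Q m) (r : ℕ) :
    ∀ k, p ∣ lucasU P Q (r + m * k) ↔ p ∣ lucasU P Q r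
  | 0 => by simp
  | k + 1 => by
    rw [mul_add_one, ← add_assoc, add_comm, hp.dvd_lucasU_add_iff hpQ hm,
      Prime.dvd_lucasU_add_mul_iff hm r k]

theorem Prime.dvd_lucasU_gcd {m n : ℕ} :
    p ∣ lucasU P Q m → p ∣ lucasU P Q n → p ∣ lucasU P Q (m.gcd n) := by
  induction m, n using Nat.gcd.induction with
  | H0 n => simp
  | H1 m n _ ih =>
    intro hm hn
    rw [Nat.gcd_rec]
    refine ih ?_ hm
    rwa [← Nat.mod_add_div n m, hp.dvd_lucasU_add_mul_iff hpQ hm] at hn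

end Lucas

namespace MvPolynomial

theorem not_X_dvd_of_coeff_ne_zero {σ R : Type*} [CommSemiring R] {i : σ}
    {m : σ →₀ ℕ} {p : MvPolynomial σ R} (hm : m i = 0) (hp : coeff m p ≠ 0) : ¬X i ∣ p := by
  classical
  rintro ⟨q, rfl⟩
  simp [coeff_X_mul', hm] at hp

theorem linearMap_mem_of_mem_ideal_span {σ R M : Type*} [CommRing R]
    [AddCommGroup M] [Module R M] (φ : MvPolynomial σ R →ₗ[R] M) {N : Submodule R M}
    {T : Set (MvPolynomial σ R)} (hT : ∀ q ∈ T, ∀ μ, φ (monomial μ 1 * q) ∈ N)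
    {w : MvPolynomial σ R} (hw : w ∈ Ideal.span T) : φ w ∈ N := by
  suffices ∀ g, φ (g * w) ∈ N by simpa using this 1
  induction hw using Submodule.span_induction with
  | mem q hq =>
    intro g
    induction g using MvPolynomial.induction_on' with
    | monomial μ r =>
      rw [show monomial μ r = r • monomial μ (1 : R) by simp [smul_monomial], smul_mul_assoc,
        map_smul]
      exact N.smul_mem r (hT q hq μ)
    | add g g' hg hg' => rw [add_mul, map_add]; exact N.add_mem hg hg'
  | zero => simp
  | add w w' _ _ hw hw' => intro g; rw [mul_add, map_add]; exact N.add_mem (hw g) (hw' g)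
  | smul a w _ hw => intro g; rw [smul_eq_mul, ← mul_assoc]; exact hw _

end MvPolynomial

namespace Aring

variable (K : Type) [Field K]

theorem not_X_dvd_X_one_sq_add_X_two_sq (i : Fin 3) :
    ¬X i ∣ (X 1 ^ 2 + X 2 ^ 2 : MvPolynomial (Fin 3) K) := by
  refine not_X_dvd_of_coeff_ne_zero
    (m := Finsupp.single (if i = 1 then (2 : Fin 3) else 1) 2) ?_ ?_ <;>
    fin_cases i <;> simp [coeff_X_pow, Finsupp.single_eq_single_iff]

theorem prime_sQuad : Prime (sQuad K) := by
  have hrel (i : Fin 3) : IsRelPrime (X 1 ^ 2 + X 2 ^ 2 : MvPolynomial (Fin 3) K) (X i) :=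
    (X_prime.irreducible.isRelPrime_iff_not_dvd.2 (not_X_dvd_X_one_sq_add_X_two_sq K i)).symm
  have he : finSuccEquiv K 3 (sQuad K) =
      Polynomial.C (X 1 ^ 2 + X 2 ^ 2) * Polynomial.X + Polynomial.C (X 0 * X 1 * X 2) := by
    simp only [sQuad, map_add, map_mul, map_pow, finSuccEquiv_X_zero,
      show (1 : Fin 4) = Fin.succ 0 from rfl, show (2 : Fin 4) = Fin.succ 1 from rfl,
      show (3 : Fin 4) = Fin.succ 2 from rfl, finSuccEquiv_X_succ]
    ring
  rw [← MulEquiv.prime_iff (finSuccEquiv K 3), he,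
    ← UniqueFactorizationMonoid.irreducible_iff_prime]
  refine Polynomial.irreducible_C_mul_X_add_C ?_ (((hrel 0).mul_right (hrel 1)).mul_right (hrel 2))
  exact fun h => not_X_dvd_X_one_sq_add_X_two_sq K 0 (h ▸ dvd_zero _)

theorem aeval_lucasU (n : ℕ) :
    aeval ![(0 : Polynomial K), Polynomial.X]
      (lucasU (X 1 : MvPolynomial (Fin 2) K) (X 0 ^ 2) (n + 1)) = Polynomial.X ^ n := by
  simp [map_lucasU, lucasU_zero_right]

theorem not_X_zero_dvd_lucasU (n : ℕ) :
    ¬X 0 ∣ lucasU (X 1 : MvPolynomial (Fin 2) K) (X 0 ^ 2) (n + 1) := by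
  rintro ⟨c, hc⟩
  have := aeval_lucasU K n
  simp [hc, eq_comm (a := (0 : Polynomial K))] at this

theorem exists_prime_dvd_lucasU {n : ℕ} (hn : 2 ≤ n) :
    ∃ p : MvPolynomial (Fin 2) K, Prime p ∧ p ∣ lucasU (X 1) (X 0 ^ 2) n := by
  obtain ⟨n, rfl⟩ := Nat.exists_eq_add_of_le' hn
  have hU := aeval_lucasU K (n + 1)
  obtain ⟨p, hp, hpU⟩ := WfDvdMonoid.exists_irreducible_factor
    (fun h => Polynomial.not_isUnit_X (isUnit_pow_succ_iff.1 (hU ▸ h.map _)))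
    (fun h => by simp [h, eq_comm (a := (0 : Polynomial K))] at hU)
  exact ⟨p, hp.prime, hpU⟩

theorem not_dvd_lucasU_of_coprime {p : MvPolynomial (Fin 2) K} (hp : Prime p) {m n : ℕ}
    (hmn : m.Coprime n) (hm₀ : 0 < m) (hm : p ∣ lucasU (X 1) (X 0 ^ 2) m) :
    ¬p ∣ lucasU (X 1) (X 0 ^ 2) n := fun hn => by
  obtain ⟨m, rfl⟩ := Nat.exists_eq_add_one.2 hm₀
  have hpQ : ¬p ∣ X 0 ^ 2 := fun h => not_X_zero_dvd_lucasU K m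
    ((hp.associated_of_dvd X_prime (hp.dvd_of_dvd_pow h)).symm.dvd.trans hm)
  have := hp.dvd_lucasU_gcd hpQ hm hn
  rw [hmn, lucasU_one] at this
  exact hp.not_isUnit (isUnit_of_dvd_one this)

-- `U 0 = 0` makes the functional kill multiples of `xⁿ`, and the recurrence of `U` makes it kill
-- multiples of `sx² + txy + sy²` (`dualCoeff_relation`).
noncomputable def dualCoeff (n i j : ℕ) : MvPolynomial (Fin 2) K :=
  if i + j = n then (-1) ^ (j + 1) * X 0 ^ i * lucasU (X 1) (X 0 ^ 2) j else 0

-- The outer variables `X 0`, `X 1` play the roles of `x`, `y`.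
noncomputable def dualFunctional (n : ℕ) :
    MvPolynomial (Fin 2) (MvPolynomial (Fin 2) K) →ₗ[MvPolynomial (Fin 2) K]
      MvPolynomial (Fin 2) K :=
  (basisMonomials (Fin 2) _).constr (MvPolynomial (Fin 2) K)
    fun μ => dualCoeff K n (μ 0) (μ 1)

theorem dualFunctional_monomial (n : ℕ) (μ : Fin 2 →₀ ℕ) :
    dualFunctional K n (monomial μ 1) = dualCoeff K n (μ 0) (μ 1) := by
  unfold dualFunctional
  simpa using (basisMonomials (Fin 2) _).constr_basis (MvPolynomial (Fin 2) K)
    (fun μ => dualCoeff K n (μ 0) (μ 1)) μ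

theorem dualFunctional_monomial_mul (n : ℕ) (μ : Fin 2 →₀ ℕ) (i j : ℕ) :
    dualFunctional K n (monomial μ 1 * (X 0 ^ i * X 1 ^ j)) =
      dualCoeff K n (μ 0 + i) (μ 1 + j) := by
  rw [X_pow_eq_monomial, X_pow_eq_monomial, monomial_mul, monomial_mul, mul_one, mul_one,
    dualFunctional_monomial]
  simp

theorem dualCoeff_relation (n i j : ℕ) :
    X 0 * dualCoeff K n (i + 2) j + X 1 * dualCoeff K n (i + 1) (j + 1) +
      X 0 * dualCoeff K n i (j + 2) = 0 := by
  unfold dualCoeff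
  by_cases h : i + j + 2 = n
  · rw [if_pos (by omega), if_pos (by omega), if_pos (by omega), lucasU_add_two]
    ring
  · rw [if_neg (by omega), if_neg (by omega), if_neg (by omega)]
    ring

theorem dualFunctional_mem_span_lucasU {n : ℕ}
    {w : MvPolynomial (Fin 2) (MvPolynomial (Fin 2) K)}
    (hw : w ∈ Ideal.span {X 0 ^ n, X 1 ^ n,
      C (X 0) * X 0 ^ 2 + C (X 1) * X 0 * X 1 + C (X 0) * X 1 ^ 2}) :
    dualFunctional K n w ∈ Ideal.span {lucasU (X 1) (X 0 ^ 2) n} := by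
  refine linearMap_mem_of_mem_ideal_span _ ?_ hw
  simp only [Set.mem_insert_iff, Set.mem_singleton_iff]
  rintro q (rfl | rfl | rfl) μ
  · have := dualFunctional_monomial_mul K n μ n 0
    rw [pow_zero, mul_one] at this
    rw [this, dualCoeff]
    split_ifs with h
    · obtain ⟨h0, h1⟩ : μ 0 = 0 ∧ μ 1 = 0 := by omega
      simp [h1]
    · exact zero_mem _
  · have := dualFunctional_monomial_mul K n μ 0 n
    rw [pow_zero, one_mul] at this
    rw [this, dualCoeff]
    split_ifs with h
    · obtain ⟨h0, h1⟩ : μ 0 = 0 ∧ μ 1 = 0 := by omega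
      simp only [h0, h1, zero_add, pow_zero, mul_one]
      exact Ideal.mul_mem_left _ _ (Ideal.subset_span rfl)
    · exact zero_mem _
  · have : (monomial μ 1 * (C (X 0) * X 0 ^ 2 + C (X 1) * X 0 * X 1 + C (X 0) * X 1 ^ 2) :
        MvPolynomial (Fin 2) (MvPolynomial (Fin 2) K)) =
        (X 0 : MvPolynomial (Fin 2) K) • (monomial μ 1 * (X 0 ^ 2 * X 1 ^ 0)) +
          (X 1 : MvPolynomial (Fin 2) K) • (monomial μ 1 * (X 0 ^ 1 * X 1 ^ 1)) +
          (X 0 : MvPolynomial (Fin 2) K) • (monomial μ 1 * (X 0 ^ 0 * X 1 ^ 2)) := by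
      simp only [smul_eq_C_mul]
      ring
    rw [this, map_add, map_add, map_smul, map_smul, map_smul, dualFunctional_monomial_mul,
      dualFunctional_monomial_mul, dualFunctional_monomial_mul, smul_eq_mul, smul_eq_mul,
      smul_eq_mul, add_zero, add_zero, dualCoeff_relation]
    exact zero_mem _

noncomputable def inclST : MvPolynomial (Fin 2) K →ₐ[K] MvPolynomial (Fin 4) K :=
  aeval ![X 0, X 1]

-- `K[s,t,x,y] ≅ K[s,t][x,y]`
noncomputable def toPolyOverST :
    MvPolynomial (Fin 4) K →ₐ[K] MvPolynomial (Fin 2) (MvPolynomial (Fin 2) K) :=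
  aeval ![C (X 0), C (X 1), X 0, X 1]

noncomputable def evalXY0 : Aring K →ₐ[K] MvPolynomial (Fin 2) K :=
  Ideal.Quotient.liftₐ _ (aeval ![X 0, X 1, 0, 0]) fun a ha => by
    obtain ⟨c, rfl⟩ := Ideal.mem_span_singleton'.1 ha
    simp [sQuad]

theorem evalXY0_π (r : MvPolynomial (Fin 4) K) :
    evalXY0 K (π K r) = aeval ![X 0, X 1, 0, 0] r := rfl

theorem evalXY0_π_inclST (g : MvPolynomial (Fin 2) K) : evalXY0 K (π K (inclST K g)) = g := by
  rw [evalXY0_π, inclST, ← AlgHom.comp_apply]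
  conv_rhs => rw [← AlgHom.id_apply (R := K) g]
  congr 1
  ext i
  fin_cases i <;> simp

theorem toPolyOverST_inclST (g : MvPolynomial (Fin 2) K) :
    toPolyOverST K (inclST K g) = C g := by
  rw [inclST, ← AlgHom.comp_apply]
  conv_rhs => rw [← algebraMap_eq, ← IsScalarTower.coe_toAlgHom' K]
  congr 1
  ext i
  fin_cases i <;> simp [toPolyOverST]

theorem π_surjective : Function.Surjective (π K) := Ideal.Quotient.mk_surjective

theorem sub_π_inclST_evalXY0_mem (a : Aring K) :
    a - π K (inclST K (evalXY0 K a)) ∈ Ideal.span {π K (X 2), π K (X 3)} := by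
  rw [← Ideal.Quotient.eq]
  obtain ⟨r, rfl⟩ := π_surjective K a
  induction r using MvPolynomial.induction_on with
  | C c => simp [evalXY0_π, inclST, ← algebraMap_eq]
  | add p q hp hq => simp only [map_add, hp, hq]
  | mul_X p i ih =>
    simp only [map_mul, ih]
    congr 1
    fin_cases i
    · simp [evalXY0_π, inclST]
    · simp [evalXY0_π, inclST]
    all_goals
      rw [show evalXY0 K (π K (X _)) = 0 by simp [evalXY0_π], map_zero, map_zero, map_zero,
        Ideal.Quotient.eq_zero_iff_mem]
      exact Ideal.subset_span (by simp)

theorem π_mem_span_iff (n : ℕ) (w : MvPolynomial (Fin 4) K) :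
    π K w ∈ Ideal.span {π K (X 2 ^ n), π K (X 3 ^ n)} ↔
      w ∈ Ideal.span {X 2 ^ n, X 3 ^ n, sQuad K} := by
  rw [← Set.image_pair, ← Ideal.map_span, π, Ideal.mem_quotient_iff_mem_sup, ← Ideal.span_union,
    Set.insert_union, Set.singleton_union]

theorem lucasU_mul_sub_mem : ∀ k : ℕ,
    lucasU (X 1 : MvPolynomial (Fin 4) K) (X 0 ^ 2) (k + 1) * (X 0 * X 2 ^ k * X 3) -
      (-1) ^ k * (X 0 * X 3) ^ (k + 1) ∈ Ideal.span {X 2 ^ (k + 1), sQuad K}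
  | 0 => by simp
  | 1 => Ideal.mem_span_pair.2 ⟨-X 0 ^ 2, X 0, by
    simp only [lucasU_add_two, Nat.reduceAdd, zero_add, lucasU_zero, lucasU_one, sQuad]; ring⟩
  | k + 2 => by
    obtain ⟨a₀, b₀, h₀⟩ := Ideal.mem_span_pair.1 (lucasU_mul_sub_mem k)
    obtain ⟨a₁, b₁, h₁⟩ := Ideal.mem_span_pair.1 (lucasU_mul_sub_mem (k + 1))
    -- the remaining terms combine to `(-1)ᵏ⁺¹ (sy)ᵏ⁺¹ · s · (sx² + txy + sy²)`
    refine Ideal.mem_span_pair.2 ⟨X 1 * a₁ - X 0 ^ 2 * a₀,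
      X 1 * X 2 * b₁ - X 0 ^ 2 * X 2 ^ 2 * b₀ + (-1) ^ (k + 1) * X 0 * (X 0 * X 3) ^ (k + 1), ?_⟩
    rw [lucasU_add_two]
    simp only [sQuad] at h₀ h₁ ⊢
    linear_combination (X 1 * X 2 : MvPolynomial (Fin 4) K) * h₁ - (X 0 ^ 2 * X 2 ^ 2) * h₀

theorem inclST_lucasU_mul_mem (l : ℕ) :
    inclST K (lucasU (X 1) (X 0 ^ 2) (l + 1)) * (X 0 * X 2 ^ l * X 3) ∈
      Ideal.span {X 2 ^ (l + 1), X 3 ^ (l + 1), sQuad K} := by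
  have hle : Ideal.span {X 2 ^ (l + 1), sQuad K} ≤
      Ideal.span {X 2 ^ (l + 1), X 3 ^ (l + 1), sQuad K} :=
    Ideal.span_mono (by simp [Set.insert_subset_iff])
  rw [map_lucasU, map_pow, inclST, aeval_X, aeval_X, ← sub_add_cancel (_ * _)
    ((-1) ^ l * (X 0 * X 3) ^ (l + 1))]
  refine add_mem (hle (lucasU_mul_sub_mem K l)) (Ideal.mul_mem_left _ _ ?_)
  rw [mul_pow]
  exact Ideal.mul_mem_left _ _ (Ideal.subset_span (by simp))

theorem lucasU_dvd_of_inclST_mul_mem {l : ℕ} {g : MvPolynomial (Fin 2) K}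
    (h : inclST K g * (X 0 * X 2 ^ l * X 3) ∈
      Ideal.span {X 2 ^ (l + 1), X 3 ^ (l + 1), sQuad K}) :
    lucasU (X 1) (X 0 ^ 2) (l + 1) ∣ g := by
  have hval : toPolyOverST K (inclST K g * (X 0 * X 2 ^ l * X 3)) =
      (g * X 0) • (monomial 0 1 * (X 0 ^ l * X 1 ^ 1)) := by
    rw [map_mul, toPolyOverST_inclST, smul_eq_C_mul, monomial_zero', C_1, one_mul]
    simp only [toPolyOverST, map_mul, map_pow, aeval_X, Matrix.cons_val_zero, Matrix.cons_val]
    ring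
  have hgen : toPolyOverST K '' {X 2 ^ (l + 1), X 3 ^ (l + 1), sQuad K} =
      {X 0 ^ (l + 1), X 1 ^ (l + 1),
        C (X 0) * X 0 ^ 2 + C (X 1) * X 0 * X 1 + C (X 0) * X 1 ^ 2} := by
    simp [toPolyOverST, sQuad, Set.image_insert_eq]
  have := dualFunctional_mem_span_lucasU K (n := l + 1)
    (hgen ▸ Ideal.map_span (toPolyOverST K) _ ▸ Ideal.mem_map_of_mem (toPolyOverST K) h)
  rw [hval, map_smul, dualFunctional_monomial_mul, Ideal.mem_span_singleton] at this
  simp only [dualCoeff, Finsupp.coe_zero, Pi.zero_apply, zero_add, if_true, lucasU_one,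
    smul_eq_mul] at this
  refine ((X_prime.irreducible.isRelPrime_iff_not_dvd.2
    (not_X_zero_dvd_lucasU K l)).pow_left (m := l + 1)).symm.dvd_of_dvd_mul_right ?_
  convert this using 1
  ring

theorem inclST_mul_mem_iff (l : ℕ) (g : MvPolynomial (Fin 2) K) :
    inclST K g * (X 0 * X 2 ^ l * X 3) ∈ Ideal.span {X 2 ^ (l + 1), X 3 ^ (l + 1), sQuad K} ↔
      lucasU (X 1) (X 0 ^ 2) (l + 1) ∣ g := by
  refine ⟨lucasU_dvd_of_inclST_mul_mem K, ?_⟩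
  rintro ⟨c, rfl⟩
  rw [map_mul, mul_comm (inclST K _), mul_assoc]
  exact Ideal.mul_mem_left _ _ (inclST_lucasU_mul_mem K l)

theorem mul_mem_span_pow_iff (l : ℕ) (a : Aring K) :
    a * π K (X 0 * X 2 ^ l * X 3) ∈ Ideal.span {π K (X 2 ^ (l + 1)), π K (X 3 ^ (l + 1))} ↔
      lucasU (X 1) (X 0 ^ 2) (l + 1) ∣ evalXY0 K a := by
  have hxy : ∀ b ∈ Ideal.span {π K (X 2), π K (X 3)},
      b * π K (X 0 * X 2 ^ l * X 3) ∈ Ideal.span {π K (X 2 ^ (l + 1)), π K (X 3 ^ (l + 1))} := by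
    intro b hb
    obtain ⟨c, d, rfl⟩ := Ideal.mem_span_pair.1 hb
    rw [add_mul, mul_assoc c, mul_assoc d, ← map_mul, ← map_mul]
    refine add_mem (Ideal.mul_mem_left _ _ ?_) (Ideal.mul_mem_left _ _ ?_) <;>
      rw [π_mem_span_iff]
    · rw [show (X 2 * (X 0 * X 2 ^ l * X 3) : MvPolynomial (Fin 4) K) =
          X 0 * X 3 * X 2 ^ (l + 1) by ring]
      exact Ideal.mul_mem_left _ _ (Ideal.subset_span (by simp))
    · rw [show (X 3 * (X 0 * X 2 ^ l * X 3) : MvPolynomial (Fin 4) K) =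
          X 2 ^ l * sQuad K - (X 0 * X 2 + X 1 * X 3) * X 2 ^ (l + 1) by rw [sQuad]; ring]
      exact sub_mem (Ideal.mul_mem_left _ _ (Ideal.subset_span (by simp)))
        (Ideal.mul_mem_left _ _ (Ideal.subset_span (by simp)))
  calc a * π K (X 0 * X 2 ^ l * X 3) ∈ Ideal.span {π K (X 2 ^ (l + 1)), π K (X 3 ^ (l + 1))} ↔
        π K (inclST K (evalXY0 K a)) * π K (X 0 * X 2 ^ l * X 3) ∈
          Ideal.span {π K (X 2 ^ (l + 1)), π K (X 3 ^ (l + 1))} := by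
        have h := Submodule.add_mem_iff_right _ (hxy _ (sub_π_inclST_evalXY0_mem K a))
          (y := π K (inclST K (evalXY0 K a)) * π K (X 0 * X 2 ^ l * X 3))
        rwa [← add_mul, sub_add_cancel] at h
    _ ↔ lucasU (X 1) (X 0 ^ 2) (l + 1) ∣ evalXY0 K a := by
        rw [← map_mul, π_mem_span_iff, inclST_mul_mem_iff]

theorem comap_evalXY0_mem_associatedPrimes {l : ℕ} {p : MvPolynomial (Fin 2) K} (hp : Prime p)
    (hpU : p ∣ lucasU (X 1) (X 0 ^ 2) (l + 1)) :
    (Ideal.span {p}).comap (evalXY0 K) ∈ associatedPrimes (Aring K)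
      (Aring K ⧸ Ideal.span {π K (X 2 ^ (l + 1)), π K (X 3 ^ (l + 1))}) := by
  obtain ⟨k, hk⟩ := hpU
  have hk₀ : k ≠ 0 := by
    rintro rfl
    exact not_X_zero_dvd_lucasU K l (by simp [hk])
  have := (Ideal.span_singleton_prime hp.ne_zero).2 hp
  refine isAssociatedPrime_iff.2 ⟨Ideal.comap_isPrime _ _,
    Ideal.Quotient.mk _ (π K (inclST K k * (X 0 * X 2 ^ l * X 3))), ?_⟩
  ext a
  rw [Submodule.mem_colon_singleton, Submodule.mem_bot]
  change _ ↔ Ideal.Quotient.mk _ (a * _) = 0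
  rw [Ideal.Quotient.eq_zero_iff_mem, map_mul, ← mul_assoc, mul_mem_span_pow_iff, map_mul,
    evalXY0_π_inclST, hk, mul_dvd_mul_iff_right hk₀, Ideal.mem_comap, Ideal.mem_span_singleton]

theorem dvd_of_comap_evalXY0_le {p p' : MvPolynomial (Fin 2) K}
    (h : (Ideal.span {p}).comap (evalXY0 K) ≤ (Ideal.span {p'}).comap (evalXY0 K)) : p' ∣ p := by
  have := h (show π K (inclST K p) ∈ (Ideal.span {p}).comap (evalXY0 K) by
    simp [evalXY0_π_inclST])
  rwa [Ideal.mem_comap, evalXY0_π_inclST, Ideal.mem_span_singleton] at this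

end Aring

open Aring in
/-- `A = K[s,t,x,y]/(sx²+txy+sy²)` is an integral domain and
`⋃_{n ≥ 1} Ass_A A/(xⁿ,yⁿ)` is infinite. -/
theorem stmt_14 (K : Type) [Field K] :
    IsDomain (Aring K) ∧
      (⋃ n ∈ {n : ℕ | 0 < n},
        associatedPrimes (Aring K)
          (Aring K ⧸ Ideal.span {π K (X 2 ^ n), π K (X 3 ^ n)})).Infinite := by
  refine ⟨(Ideal.Quotient.isDomain_iff_prime _).2
    ((Ideal.span_singleton_prime (prime_sQuad K).ne_zero).2 (prime_sQuad K)), ?_⟩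
  have := Nat.infinite_setOfPred_prime.to_subtype
  choose p hp hpU using fun q : {q | Nat.Prime q} => exists_prime_dvd_lucasU K q.2.two_le
  refine Set.infinite_of_injective_forall_mem
    (f := fun q => (Ideal.span {p q}).comap (evalXY0 K)) (fun q q' h => ?_) (fun q => ?_)
  · by_contra hne
    exact not_dvd_lucasU_of_coprime K (hp q)
      ((Nat.coprime_primes q.2 q'.2).2 (Subtype.coe_ne_coe.2 hne)) q.2.pos (hpU q)
      ((dvd_of_comap_evalXY0_le K h.ge).trans (hpU q'))
  · obtain ⟨l, hl⟩ := Nat.exists_eq_add_one.2 q.2.pos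
    refine Set.mem_biUnion (x := q.1) q.2.pos ?_
    rw [hl]
    exact comap_evalXY0_mem_associatedPrimes K (hp q) (hl ▸ hpU q)
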